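/- Let G be a 2k-tree-connected multigraph. Then bi(G) ≥ k if and only if G contains k pairwise edge-disjoint odd cycles. -/

import Mathlib

namespace MG

variable {V E : Type} [Fintype V] [Fintype E] [DecidableEq V] [DecidableEq E]

/-- Degree of `v` in the spanning subgraph with edge set `S`; loops count twice. -/
def deg (ends : E → V × V) (S : Finset E) (v : V) : ℕ :=
  (S.filter fun e => (ends e).1 = v).card + (S.filter fun e => (ends e).2 = v).card

/-- Edges of `S` with exactly one end in `A`. -/
def cut (ends : E → V × V) (S : Finset E) (A : Finset V) : Finset E :=
  S.filter fun e => ¬ (((ends e).1 ∈ A) ↔ ((ends e).2 ∈ A))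

/-- Edges of `S` with both ends in `A`. -/
def inside (ends : E → V × V) (S : Finset E) (A : Finset V) : Finset E :=
  S.filter fun e => (ends e).1 ∈ A ∧ (ends e).2 ∈ A

/-- `m`-edge-connected: every edge cut has at least `m` edges. -/
def EdgeConn (ends : E → V × V) (m : ℕ) : Prop :=
  ∀ A : Finset V, A.Nonempty → A ≠ Finset.univ → m ≤ (cut ends Finset.univ A).card

/-- Essentially `lam`-edge-connected: every edge cut of size `< lam` has all its
edges incident with one common vertex. -/
def EssEdgeConn (ends : E → V × V) (lam : ℕ) : Prop :=
  ∀ A : Finset V, A.Nonempty → A ≠ Finset.univ →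
    (cut ends Finset.univ A).card < lam →
      ∃ v : V, ∀ e ∈ cut ends Finset.univ A, (ends e).1 = v ∨ (ends e).2 = v

/-- The edge set `S` induces a bipartite graph. -/
def BipOn (ends : E → V × V) (S : Finset E) : Prop :=
  ∃ X : Finset V, ∀ e ∈ S, ¬ (((ends e).1 ∈ X) ↔ ((ends e).2 ∈ X))

/-- Edges of `S` not crossing the bipartition `(X, Xᶜ)`. -/
def bad (ends : E → V × V) (S : Finset E) (X : Finset V) : Finset E :=
  S.filter fun e => (((ends e).1 ∈ X) ↔ ((ends e).2 ∈ X))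

/-- The bipartite index: fewest edge deletions making the graph `(V, S)` bipartite. -/
def biIndexOn (ends : E → V × V) (S : Finset E) : ℕ :=
  Finset.univ.inf' Finset.univ_nonempty fun X : Finset V => (bad ends S X).card

/-- Adjacency via an edge of `S`. -/
def adjOn (ends : E → V × V) (S : Finset E) (a b : V) : Prop :=
  ∃ e ∈ S, ends e = (a, b) ∨ ends e = (b, a)

/-- The spanning subgraph with edge set `S` is connected. -/
def ConnOn (ends : E → V × V) (S : Finset E) : Prop :=
  ∀ a b : V, Relation.ReflTransGen (adjOn ends S) a b

/-- `T` is the edge set of a spanning tree. -/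
def IsSpTree (ends : E → V × V) (T : Finset E) : Prop :=
  ConnOn ends T ∧ T.card + 1 = Fintype.card V

/-- `m`-tree-connected inside `S`: `m` pairwise edge-disjoint spanning trees using edges of `S`. -/
def TreeConnOn (ends : E → V × V) (m : ℕ) (S : Finset E) : Prop :=
  ∃ T : Fin m → Finset E, (∀ i, T i ⊆ S ∧ IsSpTree ends (T i)) ∧
    ∀ i j, i ≠ j → Disjoint (T i) (T j)

/-- `C` is the edge set of an odd cycle: odd, nonempty, 2-regular on its support and
connected on its support. -/
def IsOddCycle (ends : E → V × V) (C : Finset E) : Prop :=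
  C.Nonempty ∧ Odd C.card ∧ (∀ v : V, deg ends C v = 0 ∨ deg ends C v = 2) ∧
    ∀ a b : V, 0 < deg ends C a → 0 < deg ends C b →
      Relation.ReflTransGen (adjOn ends C) a b

/-- `f` is compatible with the graph with respect to the bipartition `(X, Xᶜ)`. -/
def CompatAt (ends : E → V × V) {k : ℕ} (f : V → ZMod k) (X : Finset V) : Prop :=
  (∃ x : ℕ, x ≤ (inside ends Finset.univ X).card ∧
    (∑ v ∈ X, f v) - ((2 * x : ℕ) : ZMod k) = ∑ v ∈ Xᶜ, f v) ∨
  (∃ y : ℕ, y ≤ (inside ends Finset.univ Xᶜ).card ∧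
    (∑ v ∈ X, f v) = (∑ v ∈ Xᶜ, f v) - ((2 * y : ℕ) : ZMod k))

end MG

open MG Finset

/-!
Each of the `2k` edge-disjoint spanning trees is connected, so it has at most one bipartition up
to complement. If some bipartition `X` is shared by `k` of the trees, add to each of them its own
edge not crossing `X` (there are at least `bi(G) ≥ k` of these): each resulting subgraph is
connected and not bipartite. Otherwise no bipartition is shared by `k` trees, and the trees can be
paired so that the two trees of each pair have no common bipartition, i.e. a non-bipartite union.
Either way we get `k` edge-disjoint connected non-bipartite subgraphs, each of which contains an
odd cycle, because a shortest odd closed walk is a cycle. Conversely, an odd cycle has an edge not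
crossing any given bipartition `(X, Xᶜ)`, so `k` edge-disjoint odd cycles force `bi(G) ≥ k`.
-/

namespace MG

open Function

theorem exists_injective_fin_of_le_card {α : Type*} {s : Finset α} {k : ℕ} (h : k ≤ #s) :
    ∃ f : Fin k → α, Injective f ∧ ∀ i, f i ∈ s :=
  ⟨fun i => s.equivFin.symm (Fin.castLE h i),
    fun _ _ hij => Fin.castLE_injective h (s.equivFin.symm.injective (Subtype.ext hij)),
    fun _ => (s.equivFin.symm _).2⟩

/-- Sort the items by label: a label class then occupies a block of at most `k` consecutive
positions, so positions `i` and `i + k` carry different labels. -/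
theorem exists_pairing_of_card_le {γ : Type*} {k : ℕ} (c : Fin (2 * k) → γ)
    (hc : ∀ s : Finset (Fin (2 * k)), (∀ i ∈ s, ∀ j ∈ s, c i = c j) → #s ≤ k) :
    ∃ f g : Fin k → Fin (2 * k),
      Injective (Sum.elim f g) ∧ ∀ i, c (f i) ≠ c (g i) := by
  let _ : LinearOrder γ := IsWellOrder.linearOrder WellOrderingRel
  let σ := Tuple.sort c
  have hmono : Monotone (c ∘ σ) := Tuple.monotone_sort c
  refine ⟨fun i => σ ⟨i, by omega⟩, fun i => σ ⟨i + k, by omega⟩, ?_, fun i hi => ?_⟩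
  · refine Injective.sumElim (fun i j h => ?_) (fun i j h => ?_) (fun i j h => ?_) <;>
      have h' := congrArg Fin.val (σ.injective h) <;> simp only at h'
    · exact Fin.ext h'
    · exact Fin.ext (by omega)
    · have := i.isLt
      omega
  set a : Fin (2 * k) := ⟨i, by omega⟩
  set b : Fin (2 * k) := ⟨i + k, by omega⟩
  have hconst : ∀ j ∈ Icc a b, c (σ j) = c (σ a) := fun j hj =>
    le_antisymm ((hmono (mem_Icc.mp hj).2).trans_eq hi.symm) (hmono (mem_Icc.mp hj).1)
  have hcard := hc ((Icc a b).map σ.toEmbedding) (by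
    simp only [forall_mem_map]
    exact fun x hx y hy => (hconst x hx).trans (hconst y hy).symm)
  rw [card_map, Fin.card_Icc] at hcard
  simp only [a, b] at hcard
  omega

section

variable {V E : Type} {ends : E → V × V} {S : Finset E}

inductive Walk (ends : E → V × V) (S : Finset E) : V → V → Type
  | nil (a : V) : Walk ends S a a
  | cons {a b c : V} (e : E) (he : e ∈ S) (h : ends e = (a, b) ∨ ends e = (b, a))
      (w : Walk ends S b c) : Walk ends S a c

namespace Walk

def edges : {a b : V} → Walk ends S a b → List E
  | _, _, nil _ => []
  | _, _, cons e _ _ w => e :: w.edges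

def support : {a b : V} → Walk ends S a b → List V
  | a, _, nil _ => [a]
  | a, _, cons _ _ _ w => a :: w.support

def append : {a b c : V} → Walk ends S a b → Walk ends S b c → Walk ends S a c
  | _, _, _, nil _, w' => w'
  | _, _, _, cons e he h w, w' => cons e he h (w.append w')

def reverse : {a b : V} → Walk ends S a b → Walk ends S b a
  | _, _, nil a => nil a
  | _, _, cons e he h w => w.reverse.append (cons e he h.symm (nil _))

@[simp] theorem edges_nil (a : V) : (nil a : Walk ends S a a).edges = [] := rfl

@[simp] theorem edges_cons {a b c : V} (e : E) (he : e ∈ S)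
    (h : ends e = (a, b) ∨ ends e = (b, a)) (w : Walk ends S b c) :
    (cons e he h w).edges = e :: w.edges := rfl

@[simp] theorem support_nil (a : V) : (nil a : Walk ends S a a).support = [a] := rfl

@[simp] theorem support_cons {a b c : V} (e : E) (he : e ∈ S)
    (h : ends e = (a, b) ∨ ends e = (b, a)) (w : Walk ends S b c) :
    (cons e he h w).support = a :: w.support := rfl

theorem support_eq_cons {a b : V} (w : Walk ends S a b) : w.support = a :: w.support.tail := by
  cases w <;> rfl

@[simp] theorem edges_append {a b c : V} (w : Walk ends S a b) (w' : Walk ends S b c) :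
    (w.append w').edges = w.edges ++ w'.edges := by
  induction w with
  | nil => rfl
  | cons e he h w ih => exact congrArg (e :: ·) (ih w')

@[simp] theorem length_edges_reverse {a b : V} (w : Walk ends S a b) :
    w.reverse.edges.length = w.edges.length := by
  induction w with
  | nil => rfl
  | cons e he h w ih => simp [reverse, ih]

theorem mem_of_mem_edges {a b : V} (w : Walk ends S a b) {e : E} (he : e ∈ w.edges) :
    e ∈ S := by
  induction w with
  | nil => simp at he
  | cons e' he' h w ih =>
    rcases List.mem_cons.mp he with rfl | he
    exacts [he', ih he]

theorem nonempty_of_reflTransGen {a b : V} (h : Relation.ReflTransGen (adjOn ends S) a b) :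
    Nonempty (Walk ends S a b) := by
  induction h using Relation.ReflTransGen.head_induction_on with
  | refl => exact ⟨nil b⟩
  | head hac _ ih =>
    obtain ⟨e, he, h⟩ := hac
    exact ih.map (cons e he h)

theorem reflTransGen_of_mem_support {T : Finset E} {a b v : V} (w : Walk ends S a b)
    (hT : ∀ e ∈ w.edges, e ∈ T) (hv : v ∈ w.support) :
    Relation.ReflTransGen (adjOn ends T) a v := by
  induction w with
  | nil => exact (List.mem_singleton.mp hv) ▸ .refl
  | cons e he h w ih =>
    rcases List.mem_cons.mp hv with rfl | hv
    · exact .refl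
    · exact .head ⟨e, hT e (by simp), h⟩ (ih (fun e' he' => hT e' (by simp [he'])) hv)

theorem exists_split_of_mem_edges {a b : V} (w : Walk ends S a b) {e : E} (he : e ∈ w.edges) :
    ∃ (x y : V) (p : Walk ends S a x) (q : Walk ends S y b),
      (ends e = (x, y) ∨ ends e = (y, x)) ∧
        p.edges.length + q.edges.length + 1 = w.edges.length := by
  induction w with
  | nil => simp at he
  | cons e' he' h w ih =>
    rcases List.mem_cons.mp he with rfl | he
    · exact ⟨_, _, nil _, w, h, by simp⟩
    · obtain ⟨x, y, p, q, hxy, hlen⟩ := ih he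
      exact ⟨x, y, cons e' he' h p, q, hxy, by simp; omega⟩

theorem exists_split_of_mem_support_tail {a b x : V} (w : Walk ends S a b)
    (hx : x ∈ w.support.tail) :
    ∃ (p : Walk ends S a x) (q : Walk ends S x b),
      0 < p.edges.length ∧ p.edges.length + q.edges.length = w.edges.length := by
  induction w with
  | nil => simp at hx
  | cons e he h w ih =>
    rw [support_cons, List.tail_cons, support_eq_cons] at hx
    rcases List.mem_cons.mp hx with rfl | hx
    · exact ⟨cons e he h (nil _), w, by simp, by simp; omega⟩
    · obtain ⟨p, q, hp, hlen⟩ := ih hx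
      exact ⟨cons e he h p, q, by simp, by simp; omega⟩

/-- Cut the walk at the two occurrences of the repeated vertex or edge; a repeated edge traversed
in opposite directions is dropped altogether, which accounts for the `2 * m`. -/
theorem exists_shorter_of_not_nodup {a b : V} (w : Walk ends S a b)
    (hw : ¬ (w.edges.Nodup ∧ w.support.tail.Nodup)) :
    ∃ (x : V) (c : Walk ends S x x) (r : Walk ends S a b) (m : ℕ),
      c.edges.length < w.edges.length ∧ r.edges.length < w.edges.length ∧
        c.edges.length + r.edges.length + 2 * m = w.edges.length := by
  induction w with
  | nil => simp at hw
  | @cons a b' b e he h w ih =>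
    rw [edges_cons, support_cons, List.tail_cons, support_eq_cons, List.nodup_cons,
      List.nodup_cons] at hw
    by_cases hv : b' ∈ w.support.tail
    · obtain ⟨p, q, hp, hlen⟩ := w.exists_split_of_mem_support_tail hv
      exact ⟨b', p, cons e he h q, 0, by simp; omega, by simp; omega, by simp; omega⟩
    by_cases hE : e ∈ w.edges
    · obtain ⟨x, y, p, q, hxy, hlen⟩ := w.exists_split_of_mem_edges hE
      obtain ⟨rfl, rfl⟩ | ⟨rfl, rfl⟩ : (a = x ∧ b' = y) ∨ (b' = x ∧ a = y) := by
        rcases h with h | h <;> rcases hxy with h' | h' <;> rw [h] at h' <;>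
          simp only [Prod.mk.injEq] at h' <;> grind
      · exact ⟨a, cons e he h p, cons e he h q, 0, by simp; omega, by simp; omega,
          by simp; omega⟩
      · exact ⟨b', p, q, 1, by simp; omega, by simp; omega, by simp; omega⟩
    obtain ⟨x, c, r, m, hc, hr, hlen⟩ := ih (by tauto)
    exact ⟨x, c, cons e he h r, m, by simp; omega, by simp; omega, by simp; omega⟩

end Walk

end

section

variable {V E : Type} {ends : E → V × V} {S : Finset E}

instance : Std.Symm (adjOn ends S) := ⟨fun _ _ ⟨e, he, h⟩ => ⟨e, he, h.symm⟩⟩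

def incidence [DecidableEq V] (ends : E → V × V) (v : V) (e : E) : ℕ :=
  (if (ends e).1 = v then 1 else 0) + (if (ends e).2 = v then 1 else 0)

theorem deg_eq_sum_incidence [DecidableEq V] (C : Finset E) (v : V) :
    deg ends C v = ∑ e ∈ C, incidence ends v e := by
  simp only [deg, incidence, card_filter, sum_add_distrib]

theorem Walk.sum_incidence [DecidableEq V] {a b : V} (w : Walk ends S a b) (v : V) :
    (w.edges.map (incidence ends v)).sum + (if b = v then 1 else 0) =
      2 * w.support.tail.count v + (if a = v then 1 else 0) := by
  induction w with
  | nil => simp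
  | @cons a b' b e he h w ih =>
    have he : incidence ends v e = (if a = v then 1 else 0) + (if b' = v then 1 else 0) := by
      rcases h with h | h <;> simp only [incidence, h]; omega
    rw [support_cons, List.tail_cons, support_eq_cons, List.count_cons, edges_cons,
      List.map_cons, List.sum_cons, he]
    simp only [beq_iff_eq]
    omega

theorem Walk.isOddCycle_toFinset_edges [DecidableEq V] [DecidableEq E] {a : V}
    (w : Walk ends S a a) (hodd : Odd w.edges.length) (he : w.edges.Nodup)
    (hv : w.support.tail.Nodup) :
    IsOddCycle ends w.edges.toFinset := by
  have hdeg (v : V) : deg ends w.edges.toFinset v = 2 * w.support.tail.count v := by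
    have := w.sum_incidence v
    rw [deg_eq_sum_incidence, List.sum_toFinset (incidence ends v) he]
    omega
  have hreach (v : V) (hv : 0 < deg ends w.edges.toFinset v) :
      Relation.ReflTransGen (adjOn ends w.edges.toFinset) a v := by
    rw [hdeg] at hv
    refine w.reflTransGen_of_mem_support (fun e he => List.mem_toFinset.mpr he) ?_
    rw [support_eq_cons]
    exact List.mem_cons_of_mem _ (List.count_pos_iff.mp (by omega))
  refine ⟨?_, ?_, fun v => ?_, fun x y hx hy => ?_⟩
  · rw [List.toFinset_nonempty_iff, ← List.length_pos_iff]
    exact hodd.pos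
  · rwa [List.toFinset_card_of_nodup he]
  · have := List.nodup_iff_count_le_one.mp hv v
    rw [hdeg]
    omega
  · exact (Std.Symm.symm _ _ (hreach x hx)).trans (hreach y hy)

/-- A shortest odd closed walk repeats no edge and no vertex, hence is an odd cycle. -/
theorem Walk.exists_isOddCycle_subset [DecidableEq V] [DecidableEq E] {a : V}
    (w : Walk ends S a a) (hw : Odd w.edges.length) : ∃ C ⊆ S, IsOddCycle ends C := by
  obtain ⟨n, hn⟩ : ∃ n, w.edges.length = n := ⟨_, rfl⟩
  induction n using Nat.strong_induction_on generalizing a with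
  | _ n ih =>
    by_cases hs : w.edges.Nodup ∧ w.support.tail.Nodup
    · exact ⟨_, fun e he => w.mem_of_mem_edges (List.mem_toFinset.mp he),
        w.isOddCycle_toFinset_edges hw hs.1 hs.2⟩
    obtain ⟨x, c, r, m, hc, hr, hlen⟩ := w.exists_shorter_of_not_nodup hs
    rcases Nat.even_or_odd c.edges.length with hce | hco
    · refine ih _ (hn ▸ hr) r ?_ rfl
      rw [Nat.odd_iff] at hw ⊢
      rw [Nat.even_iff] at hce
      omega
    · exact ih _ (hn ▸ hc) c hco rfl

theorem exists_odd_closed_walk [Fintype V] (hS : ConnOn ends S) (hnb : ¬ BipOn ends S) :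
    ∃ (a : V) (w : Walk ends S a a), Odd w.edges.length := by
  classical
  obtain ⟨r⟩ : Nonempty V := by
    by_contra h
    rw [not_nonempty_iff] at h
    exact hnb ⟨∅, fun e _ => isEmptyElim (ends e).1⟩
  by_contra! heven
  refine hnb ⟨univ.filter fun v => ∃ w : Walk ends S r v, Even w.edges.length, fun e he => ?_⟩
  have hpar (p : Walk ends S r (ends e).1) (q : Walk ends S r (ends e).2) :
      Even p.edges.length ↔ ¬ Even q.edges.length := by
    have := heven r (p.append (.cons e he (Or.inl rfl) q.reverse))
    simp only [Walk.edges_append, Walk.edges_cons, List.length_append, List.length_cons,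
      Walk.length_edges_reverse, Nat.not_odd_iff_even] at this
    simp only [Nat.even_iff] at this ⊢
    omega
  obtain ⟨p₀⟩ := Walk.nonempty_of_reflTransGen (hS r (ends e).1)
  obtain ⟨q₀⟩ := Walk.nonempty_of_reflTransGen (hS r (ends e).2)
  simp only [mem_filter, mem_univ, true_and]
  intro hiff
  by_cases hq : Even q₀.edges.length
  · obtain ⟨p, hp⟩ := hiff.mpr ⟨q₀, hq⟩
    exact (hpar p q₀).mp hp hq
  · obtain ⟨q, hq'⟩ := hiff.mp ⟨p₀, (hpar p₀ q₀).mpr hq⟩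
    exact (hpar p₀ q).mp ((hpar p₀ q₀).mpr hq) hq'

theorem exists_isOddCycle_subset [Fintype V] [DecidableEq V] [DecidableEq E]
    (hS : ConnOn ends S) (hnb : ¬ BipOn ends S) :
    ∃ C ⊆ S, IsOddCycle ends C :=
  let ⟨_, w, hw⟩ := exists_odd_closed_walk hS hnb
  w.exists_isOddCycle_subset hw

theorem exists_pairwise_disjoint_isOddCycle [Fintype V] [DecidableEq V] [DecidableEq E]
    {ι : Type*} (D : ι → Finset E) (hD : ∀ i, ConnOn ends (D i) ∧ ¬ BipOn ends (D i))
    (hdis : Pairwise (Disjoint on D)) :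
    ∃ C : ι → Finset E, (∀ i, IsOddCycle ends (C i)) ∧
      ∀ i j, i ≠ j → Disjoint (C i) (C j) := by
  choose C hCD hC using fun i => exists_isOddCycle_subset (hD i).1 (hD i).2
  exact ⟨C, hC, fun i j hij => (hdis hij).mono (hCD i) (hCD j)⟩

end

section

variable {V E : Type} {ends : E → V × V} {S T : Finset E} {X Y : Finset V}

def IsBipartition (ends : E → V × V) (S : Finset E) (X : Finset V) : Prop :=
  ∀ e ∈ S, ¬ (((ends e).1 ∈ X) ↔ ((ends e).2 ∈ X))

theorem IsBipartition.mono (h : T ⊆ S) (hX : IsBipartition ends S X) : IsBipartition ends T X :=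
  fun e he => hX e (h he)

theorem IsBipartition.compl [Fintype V] [DecidableEq V] (hX : IsBipartition ends S X) :
    IsBipartition ends S Xᶜ := by
  intro e he
  simp only [mem_compl]
  exact fun h => hX e he (not_iff_not.mp h)

theorem IsBipartition.eq_or_eq_compl [Fintype V] [DecidableEq V] (hS : ConnOn ends S)
    (hX : IsBipartition ends S X) (hY : IsBipartition ends S Y) : Y = X ∨ Y = Xᶜ := by
  have key (a b : V) (hab : Relation.ReflTransGen (adjOn ends S) a b) :
      (a ∈ X ↔ a ∈ Y) ↔ (b ∈ X ↔ b ∈ Y) := by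
    induction hab with
    | refl => rfl
    | tail _ hbc ih =>
      obtain ⟨e, he, h⟩ := hbc
      have hXe := hX e he
      have hYe := hY e he
      rcases h with h | h <;> rw [h] at hXe hYe <;> rw [ih] <;> tauto
  by_cases hall : ∀ z, z ∈ X ↔ z ∈ Y
  · exact .inl (ext fun z => (hall z).symm)
  · push Not at hall
    obtain ⟨z₀, hz₀⟩ := hall
    refine .inr (ext fun z => ?_)
    have := key z₀ z (hS z₀ z)
    rw [mem_compl]
    tauto

theorem setOf_isBipartition_eq [Fintype V] [DecidableEq V] (hS : ConnOn ends S)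
    (hX : IsBipartition ends S X) : {Y | IsBipartition ends S Y} = {X, Xᶜ} :=
  Set.ext fun _ => ⟨hX.eq_or_eq_compl hS, by rintro (rfl | rfl); exacts [hX, hX.compl]⟩

theorem ConnOn.mono (h : S ⊆ T) (hS : ConnOn ends S) : ConnOn ends T :=
  fun a b => Relation.ReflTransGen.mono (fun _ _ ⟨e, he, h'⟩ => ⟨e, h he, h'⟩) a b (hS a b)

theorem not_bipOn_insert [Fintype V] [DecidableEq V] [DecidableEq E] {f : E}
    (hS : ConnOn ends S) (hX : IsBipartition ends S X)
    (hf : (ends f).1 ∈ X ↔ (ends f).2 ∈ X) :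
    ¬ BipOn ends (insert f S) := by
  rintro ⟨Y, hY⟩
  have hYf := hY f (mem_insert_self f S)
  rcases hX.eq_or_eq_compl hS (IsBipartition.mono (subset_insert f S) hY) with rfl | rfl
  · exact hYf hf
  · simp only [mem_compl, not_iff_not] at hYf
    exact hYf hf

theorem IsOddCycle.not_bipOn [DecidableEq V] {C : Finset E} (hC : IsOddCycle ends C) :
    ¬ BipOn ends C := by
  rintro ⟨X, hX⟩
  obtain ⟨-, hodd, hdeg, -⟩ := hC
  have hsum : ∑ v ∈ X, deg ends C v = #C := by
    rw [card_eq_sum_ones, sum_congr rfl fun v _ => deg_eq_sum_incidence C v, sum_comm]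
    refine sum_congr rfl fun e he => ?_
    have := hX e he
    simp only [incidence, sum_add_distrib, sum_ite_eq]
    split_ifs <;> simp_all
  have heven : Even (∑ v ∈ X, deg ends C v) :=
    even_sum _ fun v _ => by rcases hdeg v with h | h <;> rw [h] <;> decide
  rw [hsum] at heven
  exact Nat.not_even_iff_odd.mpr hodd heven

theorem biIndexOn_le_card_bad [Fintype V] [DecidableEq V] (X : Finset V) :
    biIndexOn ends S ≤ #(bad ends S X) :=
  inf'_le _ (mem_univ X)

theorem card_le_biIndexOn [Fintype V] [Fintype E] [DecidableEq V] {ι : Type*} [Fintype ι]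
    (C : ι → Finset E) (hC : ∀ i, IsOddCycle ends (C i))
    (hdis : ∀ i j, i ≠ j → Disjoint (C i) (C j)) :
    Fintype.card ι ≤ biIndexOn ends univ := by
  refine le_inf' _ _ fun X _ => ?_
  have hbad (i : ι) : ∃ e ∈ C i, ((ends e).1 ∈ X ↔ (ends e).2 ∈ X) := by
    by_contra h
    exact (hC i).not_bipOn ⟨X, fun e he hiff => h ⟨e, he, hiff⟩⟩
  choose e heC heX using hbad
  rw [← card_univ]
  refine card_le_card_of_injOn e (fun i _ => mem_filter.mpr ⟨mem_univ _, heX i⟩) ?_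
  intro i _ j _ hij
  by_contra hne
  exact disjoint_left.mp (hdis i j hne) (heC i) (hij ▸ heC j)

end

section

variable {V E : Type} {ends : E → V × V}

theorem exists_nonbipartite_of_common_bipartition [Fintype V] [Fintype E] [DecidableEq V]
    [DecidableEq E] {ι : Type*} {k : ℕ} (T : ι → Finset E)
    (hT : ∀ i, ConnOn ends (T i)) (hdis : Pairwise (Disjoint on T)) {X : Finset V}
    {s : Finset ι} (hs : k ≤ #s) (hX : ∀ i ∈ s, IsBipartition ends (T i) X)
    (hbad : k ≤ #(bad ends univ X)) :
    ∃ D : Fin k → Finset E,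
      (∀ i, ConnOn ends (D i) ∧ ¬ BipOn ends (D i)) ∧ Pairwise (Disjoint on D) := by
  obtain ⟨τ, hτ, hτs⟩ := exists_injective_fin_of_le_card hs
  obtain ⟨φ, hφ, hφbad⟩ := exists_injective_fin_of_le_card hbad
  have hφX (i : Fin k) : (ends (φ i)).1 ∈ X ↔ (ends (φ i)).2 ∈ X :=
    (mem_filter.mp (hφbad i)).2
  have hφT (i j : Fin k) : φ i ∉ T (τ j) := fun h => hX _ (hτs j) _ h (hφX i)
  refine ⟨fun i => insert (φ i) (T (τ i)), fun i => ⟨(hT _).mono (subset_insert _ _),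
    not_bipOn_insert (hT _) (hX _ (hτs i)) (hφX i)⟩, fun i j hij => ?_⟩
  rw [onFun, disjoint_insert_left, disjoint_insert_right, mem_insert, not_or]
  exact ⟨⟨hφ.ne hij, hφT i j⟩, hφT j i, hdis (hτ.ne hij)⟩

open Classical in
noncomputable def bipartitionLabel {ι : Type*} (ends : E → V × V) (T : ι → Finset E)
    (j : ι) : Set (Finset V) ⊕ ι :=
  if BipOn ends (T j) then .inl {X | IsBipartition ends (T j) X} else .inr j

theorem not_bipOn_union_of_bipartitionLabel_ne [Fintype V] [DecidableEq V] [DecidableEq E]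
    {ι : Type*} {T : ι → Finset E} (hT : ∀ i, ConnOn ends (T i)) {i j : ι}
    (hij : bipartitionLabel ends T i ≠ bipartitionLabel ends T j) :
    ¬ BipOn ends (T i ∪ T j) := by
  rintro ⟨Y, hY⟩
  have hYi : IsBipartition ends (T i) Y := IsBipartition.mono subset_union_left hY
  have hYj : IsBipartition ends (T j) Y := IsBipartition.mono subset_union_right hY
  have hBi : BipOn ends (T i) := ⟨Y, hYi⟩
  have hBj : BipOn ends (T j) := ⟨Y, hYj⟩
  refine hij ?_
  simp only [bipartitionLabel, hBi, hBj, ↓reduceIte, setOf_isBipartition_eq (hT i) hYi,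
    setOf_isBipartition_eq (hT j) hYj]

theorem card_le_of_bipartitionLabel_eq {ι : Type*} {k : ℕ} {T : ι → Finset E}
    (hfew : ∀ (X : Finset V) (s : Finset ι),
      (∀ j ∈ s, IsBipartition ends (T j) X) → #s < k)
    {s : Finset ι}
    (hs : ∀ i ∈ s, ∀ j ∈ s, bipartitionLabel ends T i = bipartitionLabel ends T j) :
    #s ≤ k := by
  obtain rfl | ⟨j₀, hj₀⟩ := s.eq_empty_or_nonempty
  · simp
  by_cases hB : BipOn ends (T j₀)
  · obtain ⟨X, hX⟩ := id hB
    refine (hfew X s fun j hj => ?_).le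
    have hlabel := hs j hj j₀ hj₀
    by_cases hBj : BipOn ends (T j)
    · simp only [bipartitionLabel, hB, hBj, ↓reduceIte, Sum.inl.injEq] at hlabel
      exact (Set.ext_iff.mp hlabel X).mpr hX
    · simp [bipartitionLabel, hB, hBj] at hlabel
  · have hj (j : ι) (hj : j ∈ s) : j = j₀ := by
      by_cases hBj : BipOn ends (T j) <;>
        simpa [bipartitionLabel, hB, hBj] using hs j hj j₀ hj₀
    have hk : 0 < k := by simpa using hfew ∅ ∅ (by simp)
    have hs1 : #s ≤ 1 := card_le_one.mpr fun i hi j hj' => (hj i hi).trans (hj j hj').symm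
    omega

theorem exists_nonbipartite_pairs [Fintype V] [DecidableEq V] [DecidableEq E] {k : ℕ}
    (T : Fin (2 * k) → Finset E) (hT : ∀ i, ConnOn ends (T i)) (hdis : Pairwise (Disjoint on T))
    (hfew : ∀ (X : Finset V) (s : Finset (Fin (2 * k))),
      (∀ j ∈ s, IsBipartition ends (T j) X) → #s < k) :
    ∃ D : Fin k → Finset E,
      (∀ i, ConnOn ends (D i) ∧ ¬ BipOn ends (D i)) ∧ Pairwise (Disjoint on D) := by
  obtain ⟨f, g, hinj, hfg⟩ := exists_pairing_of_card_le (bipartitionLabel ends T)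
    fun _ hs => card_le_of_bipartitionLabel_eq hfew hs
  refine ⟨fun i => T (f i) ∪ T (g i), fun i => ⟨(hT _).mono subset_union_left,
    not_bipOn_union_of_bipartitionLabel_ne hT (hfg i)⟩, fun i j hij => ?_⟩
  have hne (x y : Fin k ⊕ Fin k) (hxy : x ≠ y) :
      Disjoint (T (Sum.elim f g x)) (T (Sum.elim f g y)) :=
    hdis (hinj.ne hxy)
  rw [onFun, disjoint_union_left, disjoint_union_right, disjoint_union_right]
  exact ⟨⟨hne (.inl i) (.inl j) (by simpa), hne (.inl i) (.inr j) Sum.inl_ne_inr⟩,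
    hne (.inr i) (.inl j) Sum.inr_ne_inl, hne (.inr i) (.inr j) (by simpa)⟩

end

end MG

theorem stmt11 {V E : Type} [Fintype V] [Fintype E] [DecidableEq V] [DecidableEq E]
    (ends : E → V × V) (k : ℕ)
    (htc : TreeConnOn ends (2 * k) Finset.univ) :
    k ≤ biIndexOn ends Finset.univ ↔
      ∃ C : Fin k → Finset E, (∀ i, IsOddCycle ends (C i)) ∧
        ∀ i j, i ≠ j → Disjoint (C i) (C j) := by
  refine ⟨fun hbi => ?_, fun ⟨C, hC, hdis⟩ => by simpa using card_le_biIndexOn C hC hdis⟩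
  obtain ⟨T, hT, hTdis⟩ := htc
  have hconn (j : Fin (2 * k)) : ConnOn ends (T j) := (hT j).2.1
  obtain ⟨D, hD, hDdis⟩ : ∃ D : Fin k → Finset E,
      (∀ i, ConnOn ends (D i) ∧ ¬ BipOn ends (D i)) ∧
        Pairwise (Function.onFun Disjoint D) := by
    by_cases hfew : ∀ (X : Finset V) (s : Finset (Fin (2 * k))),
        (∀ j ∈ s, IsBipartition ends (T j) X) → #s < k
    · exact exists_nonbipartite_pairs T hconn hTdis hfew
    · push Not at hfew
      obtain ⟨X, s, hX, hs⟩ := hfew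
      exact exists_nonbipartite_of_common_bipartition T hconn hTdis hs hX
        (hbi.trans (biIndexOn_le_card_bad X))
  exact exists_pairwise_disjoint_isOddCycle D hD hDdis
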